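/- arXiv:2009.11708 — 2 statements merged into one kernel-verified Lean document; each statement's English description precedes it below -/
import Mathlib

section
/- Let x, y : [a,b] → ℝ be C¹ functions with x(t)² + y(t)² > 0 for all t ∈ [a,b], and let θ_a ∈ ℝ satisfy (cos θ_a, sin θ_a) = (x(a), y(a))/√(x(a)² + y(a)²). Define θ(t) = θ_a + ∫_a^t (−y(u) x'(u) + x(u) y'(u))/(x(u)² + y(u)²) du. Then for every t ∈ [a,b], √(x(t)² + y(t)²)·(cos θ(t), sin θ(t)) = (x(t), y(t)); i.e. θ is a continuous angle function for the planar curve (x, y). -/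
/-!
Identify the curve with `z = x + y i : ℝ → ℂ`. The integrand is `Im (z' / z)`, and
`Re (z' / z) = (x x' + y y') / (x² + y²)` is the derivative of `log √(x² + y²)`. Hence
`L = log √(x² + y²) + i θ` satisfies `L' = z' / z`, so `z · exp (-L)` has zero derivative.
The choice of `θ_a` makes it equal to `1` at `a`, so `z = exp L = √(x² + y²) · exp (i θ)`
on all of `[a, b]`.
-/

open Set Complex

theorem hasDerivWithinAt_integral_of_continuousOn {E : Type*} [NormedAddCommGroup E]
    [NormedSpace ℝ E] [CompleteSpace E] {f : ℝ → E} {a b t : ℝ}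
    (hf : ContinuousOn f (Icc a b)) (ht : t ∈ Icc a b) :
    HasDerivWithinAt (fun u => ∫ s in a..u, f s) (f t) (Icc a b) t := by
  have : Fact (t ∈ Icc a b) := ⟨ht⟩
  refine intervalIntegral.integral_hasDerivWithinAt_right (t := Icc a b) ?_
    ⟨Icc a b, self_mem_nhdsWithin, hf.aestronglyMeasurable measurableSet_Icc⟩ (hf t ht)
  exact (hf.mono (uIcc_of_le ht.1 ▸ Icc_subset_Icc_right ht.2)).intervalIntegrable

theorem hasDerivWithinAt_mul_cexp_neg {z L : ℝ → ℂ} {z' L' : ℂ} {s : Set ℝ} {t : ℝ}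
    (hz : HasDerivWithinAt z z' s t) (hL : HasDerivWithinAt L L' s t) (h : z t * L' = z') :
    HasDerivWithinAt (fun u => z u * cexp (-L u)) 0 s t :=
  (hz.mul hL.neg.cexp).congr_deriv (by rw [← h]; ring)

theorem eq_cexp_of_hasDerivWithinAt {z L z' L' : ℝ → ℂ} {a b : ℝ}
    (hz : ∀ t ∈ Icc a b, HasDerivWithinAt z (z' t) (Icc a b) t)
    (hL : ∀ t ∈ Icc a b, HasDerivWithinAt L (L' t) (Icc a b) t)
    (h : ∀ t ∈ Icc a b, z t * L' t = z' t) (ha : z a = cexp (L a)) :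
    ∀ t ∈ Icc a b, z t = cexp (L t) := by
  have hderiv t (ht : t ∈ Icc a b) :=
    hasDerivWithinAt_mul_cexp_neg (hz t ht) (hL t ht) (h t ht)
  have hconst := constant_of_has_deriv_right_zero
    (fun t ht => (hderiv t ht).continuousWithinAt)
    (fun t ht => (hderiv t (Ico_subset_Icc_self ht)).mono_of_mem_nhdsWithin
      (Icc_mem_nhdsGE_of_mem ht))
  intro t ht
  have h1 := hconst t ht
  rwa [ha, ← exp_add, add_neg_cancel, exp_zero, exp_neg, ← div_eq_mul_inv,
    div_eq_one_iff_eq (exp_ne_zero _)] at h1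

theorem hasDerivAt_log_sqrt_sq_add_sq {x y : ℝ → ℝ} {x' y' t : ℝ}
    (hx : HasDerivAt x x' t) (hy : HasDerivAt y y' t) (h : 0 < x t ^ 2 + y t ^ 2) :
    HasDerivAt (fun u => Real.log √(x u ^ 2 + y u ^ 2))
      ((x t * x' + y t * y') / (x t ^ 2 + y t ^ 2)) t := by
  have hr : √(x t ^ 2 + y t ^ 2) ≠ 0 := (Real.sqrt_pos.2 h).ne'
  refine ((((hx.fun_pow 2).fun_add (hy.fun_pow 2)).sqrt h.ne').log hr).congr_deriv ?_
  field_simp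
  rw [Real.sq_sqrt h.le]
  norm_num
  ring

theorem ofReal_add_mul_I_mul_logDeriv (x y x' y' : ℝ) (h : x ^ 2 + y ^ 2 ≠ 0) :
    ((x : ℂ) + y * I) * (((x * x' + y * y') / (x ^ 2 + y ^ 2) : ℝ) +
      ((-y * x' + x * y') / (x ^ 2 + y ^ 2) : ℝ) * I) = x' + y' * I := by
  apply Complex.ext <;>
  · simp only [mul_re, mul_im, add_re, add_im, ofReal_re, ofReal_im, I_re, I_im]
    field_simp
    ring

theorem ofReal_add_mul_I_eq_mul_cexp_iff (x y r θ : ℝ) :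
    (x : ℂ) + y * I = r * cexp (θ * I) ↔ r * Real.cos θ = x ∧ r * Real.sin θ = y := by
  rw [Complex.ext_iff]
  simp [eq_comm]

theorem cexp_log_add_mul_I {r : ℝ} (hr : 0 < r) (θ : ℝ) :
    cexp (Real.log r + θ * I) = r * cexp (θ * I) := by
  rw [exp_add, ← ofReal_exp, Real.exp_log hr]

/-- The integral formula `θ(t) = θ_a + ∫_a^t (−y x' + x y')/(x²+y²)`
defines a continuous angle function for the planar curve `(x, y)` avoiding the origin. -/
theorem stmt_0 (a b : ℝ) (hab : a ≤ b) (x y x' y' : ℝ → ℝ)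
    (hx : ∀ t ∈ Set.Icc a b, HasDerivAt x (x' t) t)
    (hy : ∀ t ∈ Set.Icc a b, HasDerivAt y (y' t) t)
    (hx' : ContinuousOn x' (Set.Icc a b))
    (hy' : ContinuousOn y' (Set.Icc a b))
    (hpos : ∀ t ∈ Set.Icc a b, 0 < x t ^ 2 + y t ^ 2)
    (θa : ℝ)
    (hcos : Real.cos θa = x a / Real.sqrt (x a ^ 2 + y a ^ 2))
    (hsin : Real.sin θa = y a / Real.sqrt (x a ^ 2 + y a ^ 2))
    (θ : ℝ → ℝ)
    (hθ : ∀ t, θ t = θa + ∫ u in a..t,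
      (-(y u) * x' u + x u * y' u) / (x u ^ 2 + y u ^ 2)) :
    ∀ t ∈ Set.Icc a b,
      Real.sqrt (x t ^ 2 + y t ^ 2) * Real.cos (θ t) = x t ∧
      Real.sqrt (x t ^ 2 + y t ^ 2) * Real.sin (θ t) = y t := by
  have ha : a ∈ Icc a b := ⟨le_rfl, hab⟩
  have hr t (ht : t ∈ Icc a b) : 0 < √(x t ^ 2 + y t ^ 2) := Real.sqrt_pos.2 (hpos t ht)
  have hxc : ContinuousOn x (Icc a b) := fun t ht => (hx t ht).continuousAt.continuousWithinAt
  have hyc : ContinuousOn y (Icc a b) := fun t ht => (hy t ht).continuousAt.continuousWithinAt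
  have hθd t (ht : t ∈ Icc a b) : HasDerivWithinAt θ
      ((-(y t) * x' t + x t * y' t) / (x t ^ 2 + y t ^ 2)) (Icc a b) t := by
    rw [funext hθ]
    refine (hasDerivWithinAt_integral_of_continuousOn ?_ ht).const_add θa
    exact ContinuousOn.div (by fun_prop) (by fun_prop) fun t ht => (hpos t ht).ne'
  have hθa : θ a = θa := by rw [hθ, intervalIntegral.integral_same, add_zero]
  have key := eq_cexp_of_hasDerivWithinAt (z := fun t => (x t : ℂ) + y t * I)
    (L := fun t => (Real.log √(x t ^ 2 + y t ^ 2) : ℂ) + θ t * I)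
    (fun t ht => ((hx t ht).ofReal_comp.add ((hy t ht).ofReal_comp.mul_const I)).hasDerivWithinAt)
    (fun t ht => (hasDerivAt_log_sqrt_sq_add_sq (hx t ht) (hy t ht) (hpos t ht)).ofReal_comp
      |>.hasDerivWithinAt.add ((hθd t ht).ofReal_comp.mul_const I))
    (fun t ht => ofReal_add_mul_I_mul_logDeriv _ _ _ _ (hpos t ht).ne') (by
      simp only [cexp_log_add_mul_I (hr a ha), ofReal_add_mul_I_eq_mul_cexp_iff, hθa, hcos, hsin]
      constructor <;> field_simp [(hr a ha).ne'])
  intro t ht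
  rw [← ofReal_add_mul_I_eq_mul_cexp_iff, ← cexp_log_add_mul_I (hr t ht)]
  exact key t ht
end

section
/- Let B : ℝ³ → ℝ³ be a C² vector field that is nowhere zero, F̂ : ℝ³ → ℝ³ a C¹ field of unit vectors with F̂ · B = 0 everywhere, and set B_f⊥ = B × F̂. Suppose λ, α : ℝ³ → ℝ are C¹ functions with ∇×B = λ B_f⊥ + α B. Define ω_b = ((∇×B_f⊥)·B)/‖B‖², ω_f = (∇×B_f⊥)·F̂, and ω_fl = ((∇×B_f⊥)·B_f⊥)/‖B‖². Then ∇×(∇×B) = C_∥ + C_⊥, where C_∥ = (∇λ·F̂ + α² + λω_b) B and C_⊥ = −(∇λ·B) F̂ + αλ B_f⊥ + ∇α × B + λω_f F̂ + λω_fl B_f⊥; moreover C_∥ is parallel to B and C_⊥ · B = 0 pointwise. -/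
open RealInnerProductSpace

/-- The cross product on Euclidean ℝ³. -/
noncomputable def cross3 (u v : EuclideanSpace ℝ (Fin 3)) : EuclideanSpace ℝ (Fin 3) :=
  (EuclideanSpace.equiv (Fin 3) ℝ).symm
    ![u 1 * v 2 - u 2 * v 1, u 2 * v 0 - u 0 * v 2, u 0 * v 1 - u 1 * v 0]

/-- The curl `∇×V = (∂₂V₃ − ∂₃V₂, ∂₃V₁ − ∂₁V₃, ∂₁V₂ − ∂₂V₁)` of a vector field on ℝ³. -/
noncomputable def curl3 (V : EuclideanSpace ℝ (Fin 3) → EuclideanSpace ℝ (Fin 3))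
    (x : EuclideanSpace ℝ (Fin 3)) : EuclideanSpace ℝ (Fin 3) :=
  (EuclideanSpace.equiv (Fin 3) ℝ).symm
    ![fderiv ℝ V x (EuclideanSpace.single 1 1) 2 - fderiv ℝ V x (EuclideanSpace.single 2 1) 1,
      fderiv ℝ V x (EuclideanSpace.single 2 1) 0 - fderiv ℝ V x (EuclideanSpace.single 0 1) 2,
      fderiv ℝ V x (EuclideanSpace.single 0 1) 1 - fderiv ℝ V x (EuclideanSpace.single 1 1) 0]

/-!
The product rule gives `∇×(λ B_f⊥ + α B) = ∇λ × B_f⊥ + λ ∇×B_f⊥ + ∇α × B + α ∇×B`.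
By the BAC–CAB rule `∇λ × (B × F̂) = (∇λ·F̂) B − (∇λ·B) F̂`, and `∇×B_f⊥` is expanded in the
orthogonal frame `B, F̂, B × F̂`, whose squared lengths are `‖B‖², 1, ‖B‖²`. The `B`-components
make up `C_∥`; the remaining terms are multiples of `F̂`, `B_f⊥` and `∇α × B`, all orthogonal to `B`.
-/

open Matrix WithLp

local notation "E3" => EuclideanSpace ℝ (Fin 3)

section CrossProduct

lemma cross3_eq_crossProduct (u v : E3) : cross3 u v = toLp 2 (ofLp u ⨯₃ ofLp v) := rfl

lemma real_inner_eq_dotProduct (u v : E3) : ⟪u, v⟫ = ofLp u ⬝ᵥ ofLp v := by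
  simp [EuclideanSpace.inner_eq_star_dotProduct, dotProduct_comm]

lemma cross3_cross3_eq_smul_sub_smul (u v w : E3) :
    cross3 (cross3 u v) w = ⟪u, w⟫ • v - ⟪v, w⟫ • u := by
  simp only [cross3_eq_crossProduct, real_inner_eq_dotProduct, cross_cross_eq_smul_sub_smul,
    toLp_sub, toLp_smul, toLp_ofLp]

lemma cross3_cross3_eq_smul_sub_smul' (u v w : E3) :
    cross3 u (cross3 v w) = ⟪u, w⟫ • v - ⟪u, v⟫ • w := by
  rw [real_inner_comm v u]
  simp only [cross3_eq_crossProduct, real_inner_eq_dotProduct, cross_cross_eq_smul_sub_smul',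
    toLp_sub, toLp_smul, toLp_ofLp]

lemma cross3_sub_smul (u v w : E3) (a b : ℝ) :
    cross3 u (a • v - b • w) = a • cross3 u v - b • cross3 u w := by
  simp only [cross3_eq_crossProduct, ofLp_sub, ofLp_smul, map_sub, map_smul, toLp_sub, toLp_smul]

lemma real_inner_cross3_self_left (u v : E3) : ⟪cross3 u v, u⟫ = 0 := by
  rw [real_inner_comm, cross3_eq_crossProduct, real_inner_eq_dotProduct, dot_self_cross]

lemma real_inner_cross3_self_right (u v : E3) : ⟪cross3 u v, v⟫ = 0 := by
  rw [real_inner_comm, cross3_eq_crossProduct, real_inner_eq_dotProduct, dot_cross_self]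

lemma real_inner_cross3_cross3 (u v w z : E3) :
    ⟪cross3 u v, cross3 w z⟫ = ⟪u, w⟫ * ⟪v, z⟫ - ⟪u, z⟫ * ⟪v, w⟫ := by
  simp only [cross3_eq_crossProduct, real_inner_eq_dotProduct, cross_dot_cross]

lemma eq_frame_expansion {b f : E3} (hb : b ≠ 0) (hf : ‖f‖ = 1) (hfb : ⟪f, b⟫ = 0) (c : E3) :
    c = (⟪c, b⟫ / ‖b‖ ^ 2) • b + ⟪c, f⟫ • f + (⟪c, cross3 b f⟫ / ‖b‖ ^ 2) • cross3 b f := by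
  set w := cross3 b f
  have hbf : ⟪b, f⟫ = 0 := by rw [real_inner_comm, hfb]
  have hff : ⟪f, f⟫ = 1 := by rw [real_inner_self_eq_norm_sq, hf, one_pow]
  have hbb : ⟪b, b⟫ = ‖b‖ ^ 2 := real_inner_self_eq_norm_sq b
  have hww : ⟪w, w⟫ = ‖b‖ ^ 2 := by
    rw [real_inner_cross3_cross3, hff, hbf, hfb, hbb]; ring
  have hwf : cross3 w f = -b := by
    rw [cross3_cross3_eq_smul_sub_smul, hbf, hff]; module
  have hwb : cross3 w b = ‖b‖ ^ 2 • f := by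
    rw [cross3_cross3_eq_smul_sub_smul, hbb, hfb]; module
  -- expand `w × (w × c)` both directly and through `w × c = (b × f) × c`
  have hwwc : ⟪w, c⟫ • w - ⟪w, w⟫ • c = -⟪b, c⟫ • b - (⟪f, c⟫ * ‖b‖ ^ 2) • f := by
    rw [← cross3_cross3_eq_smul_sub_smul', cross3_cross3_eq_smul_sub_smul b f c,
      cross3_sub_smul, hwf, hwb]
    module
  have hb2 : ‖b‖ ^ 2 ≠ 0 := by positivity
  rw [hww, real_inner_comm c b, real_inner_comm c f, real_inner_comm c w] at hwwc
  apply smul_right_injective E3 hb2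
  linear_combination (norm := skip) -hwwc
  match_scalars <;> field_simp <;> ring

end CrossProduct

section Curl

lemma gradient_apply_euclidean {n : ℕ} (g : EuclideanSpace ℝ (Fin n) → ℝ)
    (x : EuclideanSpace ℝ (Fin n)) (i : Fin n) :
    gradient g x i = fderiv ℝ g x (EuclideanSpace.single i 1) := by
  rw [← toDual_gradient, InnerProductSpace.toDual_apply_apply, EuclideanSpace.inner_single_right]
  simp

lemma DifferentiableAt.cross3 {f g : E3 → E3} {x : E3} (hf : DifferentiableAt ℝ f x)
    (hg : DifferentiableAt ℝ g x) : DifferentiableAt ℝ (fun y => cross3 (f y) (g y)) x := by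
  rw [differentiableAt_euclidean] at hf hg ⊢
  intro i
  fin_cases i <;> exact ((hf _).mul (hg _)).sub ((hf _).mul (hg _))

lemma curl3_add {V W : E3 → E3} {x : E3} (hV : DifferentiableAt ℝ V x)
    (hW : DifferentiableAt ℝ W x) :
    curl3 (fun y => V y + W y) x = curl3 V x + curl3 W x := by
  ext i
  fin_cases i <;>
    simp only [curl3, fderiv_fun_add hV hW, _root_.add_apply, PiLp.add_apply,
      PiLp.continuousLinearEquiv_symm_apply, Fin.isValue, Fin.zero_eta, Fin.mk_one,
      Fin.reduceFinMk, cons_val, cons_val_zero, cons_val_one] <;>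
    ring

lemma curl3_smul {g : E3 → ℝ} {V : E3 → E3} {x : E3} (hg : DifferentiableAt ℝ g x)
    (hV : DifferentiableAt ℝ V x) :
    curl3 (fun y => g y • V y) x = cross3 (gradient g x) (V x) + g x • curl3 V x := by
  ext i
  fin_cases i <;>
    simp only [curl3, cross3, fderiv_fun_smul hg hV, gradient_apply_euclidean, _root_.add_apply,
      _root_.smul_apply, ContinuousLinearMap.smulRight_apply, PiLp.add_apply, PiLp.smul_apply,
      smul_eq_mul, PiLp.continuousLinearEquiv_symm_apply, Fin.isValue, Fin.zero_eta, Fin.mk_one,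
      Fin.reduceFinMk, cons_val, cons_val_zero, cons_val_one] <;>
    ring

end Curl

/-- decomposition of `∇×(∇×B)` into a component `C_∥` parallel to `B`
(changing only field strength) and a component `C_⊥` perpendicular to `B`
(changing only field-line topology), for `∇×B = λ B_f⊥ + α B` with `B_f⊥ = B × F̂`,
`ω_b = ((∇×B_f⊥)·B)/‖B‖²`, `ω_f = (∇×B_f⊥)·F̂`, `ω_fl = ((∇×B_f⊥)·B_f⊥)/‖B‖²`:
`C_∥ = (∇λ·F̂ + α² + λω_b) B` and
`C_⊥ = −(∇λ·B) F̂ + αλ B_f⊥ + ∇α × B + λω_f F̂ + λω_fl B_f⊥`. -/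
theorem stmt_6 (B Fh Bf : EuclideanSpace ℝ (Fin 3) → EuclideanSpace ℝ (Fin 3))
    (lam alp : EuclideanSpace ℝ (Fin 3) → ℝ)
    (hB : ContDiff ℝ 2 B) (hFh : ContDiff ℝ 1 Fh)
    (hBne : ∀ x, B x ≠ 0)
    (hFunit : ∀ x, ‖Fh x‖ = 1)
    (hFperp : ∀ x, ⟪Fh x, B x⟫ = 0)
    (hBf : ∀ x, Bf x = cross3 (B x) (Fh x))
    (hlam : ContDiff ℝ 1 lam) (halp : ContDiff ℝ 1 alp)
    (hcurl : ∀ x, curl3 B x = lam x • Bf x + alp x • B x)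
    (Cpar Cperp : EuclideanSpace ℝ (Fin 3) → EuclideanSpace ℝ (Fin 3))
    (hCpar : ∀ x, Cpar x =
      (⟪gradient lam x, Fh x⟫ + alp x ^ 2 +
        lam x * (⟪curl3 Bf x, B x⟫ / ‖B x‖ ^ 2)) • B x)
    (hCperp : ∀ x, Cperp x =
      (-⟪gradient lam x, B x⟫) • Fh x + (alp x * lam x) • Bf x
        + cross3 (gradient alp x) (B x)
        + (lam x * ⟪curl3 Bf x, Fh x⟫) • Fh x
        + (lam x * (⟪curl3 Bf x, Bf x⟫ / ‖B x‖ ^ 2)) • Bf x) :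
    ∀ x, curl3 (curl3 B) x = Cpar x + Cperp x ∧
      (∃ k : ℝ, Cpar x = k • B x) ∧ ⟪Cperp x, B x⟫ = 0 := by
  intro x
  have hBd : DifferentiableAt ℝ B x := (hB.differentiable two_ne_zero).differentiableAt
  have hFd : DifferentiableAt ℝ Fh x := (hFh.differentiable one_ne_zero).differentiableAt
  have hlamd : DifferentiableAt ℝ lam x := (hlam.differentiable one_ne_zero).differentiableAt
  have halpd : DifferentiableAt ℝ alp x := (halp.differentiable one_ne_zero).differentiableAt
  have hBfd : DifferentiableAt ℝ Bf x := funext hBf ▸ hBd.cross3 hFd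
  have hcurl_curl : curl3 (curl3 B) x = cross3 (gradient lam x) (Bf x) + lam x • curl3 Bf x
      + (cross3 (gradient alp x) (B x) + alp x • curl3 B x) := by
    conv_lhs => rw [funext hcurl]
    rw [curl3_add (hlamd.fun_smul hBfd) (halpd.fun_smul hBd), curl3_smul hlamd hBfd,
      curl3_smul halpd hBd]
  refine ⟨?_, ⟨_, hCpar x⟩, ?_⟩
  · have hframe := eq_frame_expansion (hBne x) (hFunit x) (hFperp x) (curl3 Bf x)
    rw [hcurl_curl, hCpar x, hCperp x, hcurl x, hBf x, cross3_cross3_eq_smul_sub_smul']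
    linear_combination (norm := module) lam x • hframe
  · rw [hCperp x, hBf x]
    simp only [inner_add_left, real_inner_smul_left, hFperp x, real_inner_cross3_self_left,
      real_inner_cross3_self_right]
    ring
end
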